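/- arXiv:2109.04585 — 2 statements merged into one kernel-verified Lean document; each statement's English description precedes it below -/
import Mathlib

section
/- Let g ∈ C²(Γ) with g_z < 0 and define Q(x,y,z) = −g_y(x,y,z)/g_z(x,y,z). Then the Jacobian matrix of the map x ↦ Q(x,y,z) (for fixed y,z) equals −Eᵗ/g_z, where E = g_{xy} − (g_z)^{-1} g_{xz} ⊗ g_y; in particular, if det E ≠ 0 (condition A2) then this Jacobian is invertible, i.e., condition A2 is self-dual. -/
/-!
Uncurry `g` to `G` on `E₁ × E₂ × ℝ`. Each partial derivative in the statement is a value of `DG` or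
`D²G` at `(x, y, z)` on a vector of one of the coordinate slices. Let `eⱼ` and `fᵢ` be the basis
vectors of the `x`- and `y`-slices. The quotient rule gives
`∂ₓⱼ Qᵢ = -(D²G(eⱼ, fᵢ) g_z - g_{yᵢ} D²G(eⱼ, ∂_z)) / g_z²`. Because `g` is `C²`, `D²G` is
symmetric, so this equals `-Eⱼᵢ / g_z`. The Jacobian is therefore `-(g_z)⁻¹ • Eᵀ`, and its
determinant is a nonzero multiple of `det E`.
-/

open Filter Topology

section

variable {E : Type*} [NormedAddCommGroup E] [NormedSpace ℝ E]

theorem fderiv_fun_div_apply {c d : E → ℝ} {a : E} (hc : DifferentiableAt ℝ c a)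
    (hd : DifferentiableAt ℝ d a) (ha : d a ≠ 0) (v : E) :
    fderiv ℝ (fun t => c t / d t) a v
      = (fderiv ℝ c a v * d a - c a * fderiv ℝ d a v) / d a ^ 2 := by
  have hinv : HasFDerivAt (fun t => (d t)⁻¹) (-(d a ^ 2)⁻¹ • fderiv ℝ d a) a :=
    (hasDerivAt_inv ha).comp_hasFDerivAt a hd.hasFDerivAt
  simp only [div_eq_mul_inv]
  rw [(hc.hasFDerivAt.fun_mul hinv).fderiv]
  simp only [add_apply, smul_apply, smul_eq_mul]
  field_simp
  ring

variable {F G : Type*} [NormedAddCommGroup F] [NormedSpace ℝ F]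
  [NormedAddCommGroup G] [NormedSpace ℝ G]

theorem fderiv_clm_apply_const_apply {c : E → F →L[ℝ] G} {a : E} (hc : DifferentiableAt ℝ c a)
    (u : F) (v : E) : fderiv ℝ (fun t => c t u) a v = fderiv ℝ c a v u := by
  simp [fderiv_clm_apply hc (differentiableAt_const u)]

end

section

variable {E₁ E₂ F : Type*} [NormedAddCommGroup E₁] [NormedSpace ℝ E₁]
  [NormedAddCommGroup E₂] [NormedSpace ℝ E₂] [NormedAddCommGroup F] [NormedSpace ℝ F]
  {x : E₁} {y : E₂} {z : ℝ}

theorem fderiv_slice_fst_apply {H : E₁ × E₂ × ℝ → F} (h : DifferentiableAt ℝ H (x, y, z))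
    (v : E₁) : fderiv ℝ (fun x' => H (x', y, z)) x v = fderiv ℝ H (x, y, z) (v, 0, 0) := by
  have := h.hasFDerivAt.comp x (f := fun x' => (x', y, z)) (hasFDerivAt_prodMk_left x (y, z))
  exact DFunLike.congr_fun this.fderiv v

theorem fderiv_slice_snd_apply {H : E₁ × E₂ × ℝ → F} (h : DifferentiableAt ℝ H (x, y, z))
    (w : E₂) : fderiv ℝ (fun y' => H (x, y', z)) y w = fderiv ℝ H (x, y, z) (0, w, 0) := by
  have := h.hasFDerivAt.comp y (f := fun y' => (x, y', z))
    ((hasFDerivAt_const x y).prodMk (hasFDerivAt_prodMk_left y z))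
  exact DFunLike.congr_fun this.fderiv w

theorem deriv_slice_thd {H : E₁ × E₂ × ℝ → F} (h : DifferentiableAt ℝ H (x, y, z)) :
    deriv (fun z' => H (x, y, z')) z = fderiv ℝ H (x, y, z) (0, 0, 1) := by
  have := h.hasFDerivAt.comp z (f := fun z' => (x, y, z'))
    ((hasFDerivAt_const x z).prodMk (hasFDerivAt_prodMk_right y z))
  rw [← fderiv_apply_one_eq_deriv]
  exact DFunLike.congr_fun this.fderiv 1

variable {G : E₁ × E₂ × ℝ → ℝ}

theorem fderiv_slice_fst_fderiv_apply (h : DifferentiableAt ℝ (fderiv ℝ G) (x, y, z))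
    (u : E₁ × E₂ × ℝ) (v : E₁) :
    fderiv ℝ (fun x' => fderiv ℝ G (x', y, z) u) x v
      = fderiv ℝ (fderiv ℝ G) (x, y, z) (v, 0, 0) u := by
  rw [fderiv_clm_apply_const_apply (c := fun x' => fderiv ℝ G (x', y, z))
      (h.comp x (by fun_prop)),
    fderiv_slice_fst_apply h]

theorem fderiv_slice_snd_fderiv_apply (h : DifferentiableAt ℝ (fderiv ℝ G) (x, y, z))
    (u : E₁ × E₂ × ℝ) (w : E₂) :
    fderiv ℝ (fun y' => fderiv ℝ G (x, y', z) u) y w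
      = fderiv ℝ (fderiv ℝ G) (x, y, z) (0, w, 0) u := by
  rw [fderiv_clm_apply_const_apply (c := fun y' => fderiv ℝ G (x, y', z))
      (h.comp y (by fun_prop)),
    fderiv_slice_snd_apply h]

theorem deriv_slice_thd_fderiv_apply (h : DifferentiableAt ℝ (fderiv ℝ G) (x, y, z))
    (u : E₁ × E₂ × ℝ) :
    deriv (fun z' => fderiv ℝ G (x, y, z') u) z
      = fderiv ℝ (fderiv ℝ G) (x, y, z) (0, 0, 1) u := by
  rw [← fderiv_apply_one_eq_deriv,
    fderiv_clm_apply_const_apply (c := fun z' => fderiv ℝ G (x, y, z'))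
      (h.comp z (by fun_prop)),
    fderiv_apply_one_eq_deriv, deriv_slice_thd h]

theorem fderiv_slice_snd_fderiv_slice_fst (hG : ∀ᶠ q in 𝓝 (x, y, z), DifferentiableAt ℝ G q)
    (h : DifferentiableAt ℝ (fderiv ℝ G) (x, y, z)) (v : E₁) (w : E₂) :
    fderiv ℝ (fun y' => fderiv ℝ (fun x' => G (x', y', z)) x v) y w
      = fderiv ℝ (fderiv ℝ G) (x, y, z) (0, w, 0) (v, 0, 0) := by
  have hev : (fun y' => fderiv ℝ (fun x' => G (x', y', z)) x v)
      =ᶠ[𝓝 y] fun y' => fderiv ℝ G (x, y', z) (v, 0, 0) := by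
    filter_upwards [(Continuous.tendsto (f := fun y' => (x, y', z)) (by fun_prop) y).eventually hG]
      with y' hy'
    exact fderiv_slice_fst_apply hy' v
  rw [hev.fderiv_eq, fderiv_slice_snd_fderiv_apply h]

theorem deriv_slice_thd_fderiv_slice_fst (hG : ∀ᶠ q in 𝓝 (x, y, z), DifferentiableAt ℝ G q)
    (h : DifferentiableAt ℝ (fderiv ℝ G) (x, y, z)) (v : E₁) :
    deriv (fun z' => fderiv ℝ (fun x' => G (x', y, z')) x v) z
      = fderiv ℝ (fderiv ℝ G) (x, y, z) (0, 0, 1) (v, 0, 0) := by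
  have hev : (fun z' => fderiv ℝ (fun x' => G (x', y, z')) x v)
      =ᶠ[𝓝 z] fun z' => fderiv ℝ G (x, y, z') (v, 0, 0) := by
    filter_upwards [(Continuous.tendsto (f := fun z' => (x, y, z')) (by fun_prop) z).eventually hG]
      with z' hz'
    exact fderiv_slice_fst_apply hz' v
  rw [hev.deriv_eq, deriv_slice_thd_fderiv_apply h]

theorem fderiv_neg_fderiv_slice_snd_div_deriv_slice_thd (hG : ContDiffAt ℝ 2 G (x, y, z))
    (hz : deriv (fun z' => G (x, y, z')) z ≠ 0) (v : E₁) (w : E₂) :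
    fderiv ℝ (fun x' => -fderiv ℝ (fun y' => G (x', y', z)) y w
        / deriv (fun z' => G (x', y, z')) z) x v
      = -(fderiv ℝ (fun y' => fderiv ℝ (fun x' => G (x', y', z)) x v) y w
          - (deriv (fun z' => G (x, y, z')) z)⁻¹
            * deriv (fun z' => fderiv ℝ (fun x' => G (x', y, z')) x v) z
            * fderiv ℝ (fun y' => G (x, y', z)) y w)
        / deriv (fun z' => G (x, y, z')) z := by
  have hG₁ : ∀ᶠ q in 𝓝 (x, y, z), DifferentiableAt ℝ G q :=
    (hG.eventually (by norm_num)).mono fun q hq => hq.differentiableAt two_ne_zero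
  have hG₂ : DifferentiableAt ℝ (fderiv ℝ G) (x, y, z) :=
    (hG.fderiv_right le_rfl).differentiableAt one_ne_zero
  have hsymm : IsSymmSndFDerivAt ℝ G (x, y, z) :=
    hG.isSymmSndFDerivAt (by simp [minSmoothness_of_isRCLikeNormedField])
  have hev : (fun x' => -fderiv ℝ (fun y' => G (x', y', z)) y w
        / deriv (fun z' => G (x', y, z')) z)
      =ᶠ[𝓝 x] fun x' => -fderiv ℝ G (x', y, z) (0, w, 0) / fderiv ℝ G (x', y, z) (0, 0, 1) := by
    filter_upwards [(Continuous.tendsto (f := fun x' => (x', y, z)) (by fun_prop) x).eventually hG₁]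
      with x' hx'
    rw [fderiv_slice_snd_apply hx', deriv_slice_thd hx']
  have hslice : DifferentiableAt ℝ (fun x' => fderiv ℝ G (x', y, z)) x := hG₂.comp x (by fun_prop)
  have hN : DifferentiableAt ℝ (fun x' => fderiv ℝ G (x', y, z) (0, w, 0)) x :=
    hslice.clm_apply (differentiableAt_const _)
  have hD : DifferentiableAt ℝ (fun x' => fderiv ℝ G (x', y, z) (0, 0, 1)) x :=
    hslice.clm_apply (differentiableAt_const _)
  rw [deriv_slice_thd hG₁.self_of_nhds] at hz ⊢
  rw [hev.fderiv_eq, fderiv_fun_div_apply hN.fun_neg hD hz, fderiv_fun_neg, neg_apply,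
    fderiv_slice_fst_fderiv_apply hG₂, fderiv_slice_fst_fderiv_apply hG₂,
    fderiv_slice_snd_fderiv_slice_fst hG₁ hG₂, deriv_slice_thd_fderiv_slice_fst hG₁ hG₂,
    fderiv_slice_snd_apply hG₁.self_of_nhds, hsymm (0, w, 0), hsymm (0, 0, 1)]
  field_simp
  ring

end

/-- For `g ∈ C²` with `g_z < 0` and `Q = -g_y/g_z`, the Jacobian matrix of
`x ↦ Q(x,y,z)` equals `-Eᵗ/g_z`; in particular when `det E ≠ 0` (condition A2)
this Jacobian matrix is invertible, i.e. condition A2 is self-dual. -/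
theorem stmt7 {n : ℕ} (Γ : Set ((Fin n → ℝ) × (Fin n → ℝ) × ℝ)) (hΓ : IsOpen Γ)
    (g : (Fin n → ℝ) → (Fin n → ℝ) → ℝ → ℝ)
    (hg : ContDiffOn ℝ 2 (fun q : (Fin n → ℝ) × (Fin n → ℝ) × ℝ => g q.1 q.2.1 q.2.2) Γ)
    (hgzneg : ∀ x y z, (x, y, z) ∈ Γ → deriv (fun z' => g x y z') z < 0)
    (Q : (Fin n → ℝ) → (Fin n → ℝ) → ℝ → (Fin n → ℝ))
    (hQ : ∀ x y z i, Q x y z i =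
      -(fderiv ℝ (fun y' => g x y' z) y (Pi.single i 1)) / deriv (fun z' => g x y z') z)
    (E : (Fin n → ℝ) → (Fin n → ℝ) → ℝ → Matrix (Fin n) (Fin n) ℝ)
    (hE : ∀ x y z, E x y z = Matrix.of fun i j =>
      fderiv ℝ (fun y' => fderiv ℝ (fun x' => g x' y' z) x (Pi.single i 1)) y (Pi.single j 1)
        - (deriv (fun z' => g x y z') z)⁻¹
            * deriv (fun z' => fderiv ℝ (fun x' => g x' y z') x (Pi.single i 1)) z
            * fderiv ℝ (fun y' => g x y' z) y (Pi.single j 1))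
    (x y : Fin n → ℝ) (z : ℝ) (hxyz : (x, y, z) ∈ Γ) :
    (∀ i j, fderiv ℝ (fun x' => Q x' y z i) x (Pi.single j 1)
        = -(E x y z j i) / deriv (fun z' => g x y z') z) ∧
      ((E x y z).det ≠ 0 →
        IsUnit (Matrix.of fun i j =>
          fderiv ℝ (fun x' => Q x' y z i) x (Pi.single j 1)).det) := by
  have hgz : deriv (fun z' => g x y z') z ≠ 0 := (hgzneg x y z hxyz).ne
  have hjac : ∀ i j, fderiv ℝ (fun x' => Q x' y z i) x (Pi.single j 1)
      = -(E x y z j i) / deriv (fun z' => g x y z') z := by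
    intro i j
    rw [funext fun x' => hQ x' y z i, hE, Matrix.of_apply]
    exact fderiv_neg_fderiv_slice_snd_div_deriv_slice_thd (hg.contDiffAt (hΓ.mem_nhds hxyz)) hgz
      (Pi.single j 1) (Pi.single i 1)
  refine ⟨hjac, fun hdet => ?_⟩
  have hmat : (Matrix.of fun i j => fderiv ℝ (fun x' => Q x' y z i) x (Pi.single j 1))
      = (-(deriv (fun z' => g x y z') z)⁻¹) • (E x y z).transpose := by
    ext i j
    rw [Matrix.of_apply, hjac, Matrix.smul_apply, Matrix.transpose_apply, smul_eq_mul,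
      neg_div, div_eq_inv_mul, neg_mul]
  rw [hmat, Matrix.det_smul, Matrix.det_transpose]
  exact (mul_ne_zero (pow_ne_zero _ (neg_ne_zero.mpr (inv_ne_zero hgz))) hdet).isUnit
end

section
/- Every g-convex function is locally semi-convex: if u is g-convex in Ω and g ∈ C²(Γ), then for every compact K ⊂ Ω there is a constant C such that x ↦ u(x) + C|x|²/2 is convex on every ball contained in K, provided the g-supports of u on K have parameters (y,z) ranging in a compact subset of Γ. -/
/-!
Along a segment, a `C²` function whose second derivative is bounded below by `-M|d|²` becomes
convex after adding `M|x|²/2`. On `K × S` the Hessian of `g` is bounded by compactness, so every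
g-support `g(·, y, z)` of `u` turns into a convex function after adding `M|x|²/2`. These touch
`u + M|x|²/2` from below at every point of a ball in `K`, and a function touched from below at
every point by convex minorants is convex.
-/

open Set

lemma convexOn_add_mul_sq_of_hasDerivAt2_ge {D : Set ℝ} (hD : Convex ℝ D) {φ φ' φ'' : ℝ → ℝ}
    {c : ℝ} (hφ : ∀ t ∈ D, HasDerivAt φ (φ' t) t) (hφ' : ∀ t ∈ D, HasDerivAt φ' (φ'' t) t)
    (hc : ∀ t ∈ D, -c ≤ φ'' t) :
    ConvexOn ℝ D (fun t => φ t + c / 2 * t ^ 2) := by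
  have hq : ∀ t : ℝ, HasDerivAt (fun t => c / 2 * t ^ 2) (c * t) t := fun t =>
    ((hasDerivAt_pow 2 t).const_mul (c / 2)).congr_deriv (by ring)
  have hq' : ∀ t : ℝ, HasDerivAt (fun t => c * t) c t := fun t => by
    simpa using (hasDerivAt_id t).const_mul c
  refine convexOn_of_hasDerivWithinAt2_nonneg hD ?_ (fun t ht => ?_) (fun t ht => ?_)
    (fun t ht => ?_) (f' := fun t => φ' t + c * t) (f'' := fun t => φ'' t + c)
  · exact fun t ht => ((hφ t ht).add (hq t)).continuousAt.continuousWithinAt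
  · exact ((hφ t (interior_subset ht)).add (hq t)).hasDerivWithinAt
  · exact ((hφ' t (interior_subset ht)).add (hq' t)).hasDerivWithinAt
  · linarith [hc t (interior_subset ht)]

lemma apply_add_smul_le_of_fderiv_fderiv_ge {E : Type*} [NormedAddCommGroup E] [NormedSpace ℝ E]
    {F : E → ℝ} {x d : E} {c : ℝ} (hF : ∀ t ∈ Icc (0 : ℝ) 1, ContDiffAt ℝ 2 F (x + t • d))
    (hc : ∀ t ∈ Icc (0 : ℝ) 1, -c ≤ fderiv ℝ (fderiv ℝ F) (x + t • d) d d)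
    {a b : ℝ} (ha : 0 ≤ a) (hb : 0 ≤ b) (hab : a + b = 1) :
    F (x + b • d) ≤ a * F x + b * F (x + d) + a * b * c / 2 := by
  have hL : ∀ t : ℝ, HasDerivAt (fun t : ℝ => x + t • d) d t := fun t => by
    simpa using ((hasDerivAt_id t).smul_const d).const_add x
  have hφ : ∀ t ∈ Icc (0 : ℝ) 1,
      HasDerivAt (fun t => F (x + t • d)) (fderiv ℝ F (x + t • d) d) t := fun t ht =>
    ((hF t ht).differentiableAt two_ne_zero).hasFDerivAt.comp_hasDerivAt t (hL t)
  have hφ' : ∀ t ∈ Icc (0 : ℝ) 1, HasDerivAt (fun t => fderiv ℝ F (x + t • d) d)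
      (fderiv ℝ (fderiv ℝ F) (x + t • d) d d) t := fun t ht => by
    have hdiff : DifferentiableAt ℝ (fderiv ℝ F) (x + t • d) :=
      ((hF t ht).fderiv_right (m := 1) (by norm_num)).differentiableAt one_ne_zero
    have h := (hdiff.hasFDerivAt.comp_hasDerivAt (f := fun t : ℝ => x + t • d) t (hL t)).clm_apply
      (hasDerivAt_const t d)
    simpa only [Function.comp_apply, ContinuousLinearMap.map_zero, add_zero] using h
  have key := (convexOn_add_mul_sq_of_hasDerivAt2_ge (convex_Icc 0 1) hφ hφ' hc).2
    (left_mem_Icc.2 zero_le_one) (right_mem_Icc.2 zero_le_one) ha hb hab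
  simp only [smul_eq_mul, mul_zero, mul_one, zero_add, zero_smul, add_zero, one_smul] at key
  have hb2 : c / 2 * b ^ 2 = b * (c / 2) - a * b * c / 2 := by
    rw [show a = 1 - b by linarith]; ring
  linarith

lemma sq_norm_le_sum_sq {ι : Type*} [Fintype ι] (v : ι → ℝ) : ‖v‖ ^ 2 ≤ ∑ i, v i ^ 2 := by
  have hsum : 0 ≤ ∑ i, v i ^ 2 := Finset.sum_nonneg fun i _ => sq_nonneg (v i)
  refine (Real.le_sqrt (norm_nonneg v) hsum).1 <| (pi_norm_le_iff_of_nonneg (Real.sqrt_nonneg _)).2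
    fun i => Real.abs_le_sqrt ?_
  exact Finset.single_le_sum (fun j _ => sq_nonneg (v j)) (Finset.mem_univ i)

lemma sum_sq_smul_add_smul {ι : Type*} [Fintype ι] (x y : ι → ℝ) {a b : ℝ} (hab : a + b = 1) :
    ∑ i, (a • x + b • y) i ^ 2
      = a * ∑ i, x i ^ 2 + b * ∑ i, y i ^ 2 - a * b * ∑ i, (y i - x i) ^ 2 := by
  simp only [Finset.mul_sum, ← Finset.sum_add_distrib, ← Finset.sum_sub_distrib]
  refine Finset.sum_congr rfl fun i _ => ?_
  simp only [Pi.add_apply, Pi.smul_apply, smul_eq_mul]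
  rw [show a = 1 - b by linarith]; ring

lemma convexOn_add_sum_sq_of_norm_fderiv_fderiv_le {ι P : Type*} [Fintype ι]
    [NormedAddCommGroup P] [NormedSpace ℝ P] {F : (ι → ℝ) × P → ℝ} {p : P} {s : Set (ι → ℝ)}
    (hs : Convex ℝ s) {M : ℝ} (hF : ∀ x ∈ s, ContDiffAt ℝ 2 F (x, p))
    (hM : ∀ x ∈ s, ‖fderiv ℝ (fderiv ℝ F) (x, p)‖ ≤ M) :
    ConvexOn ℝ s (fun x => F (x, p) + M * (∑ i, x i ^ 2) / 2) := by
  refine ⟨hs, fun x hx y hy a b ha hb hab => ?_⟩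
  have hM0 : 0 ≤ M := (norm_nonneg (fderiv ℝ (fderiv ℝ F) (x, p))).trans (hM x hx)
  have hseg : ∀ t ∈ Icc (0 : ℝ) 1, (x, p) + t • (y - x, (0 : P)) = (x + t • (y - x), p) :=
    fun t _ => by simp
  have hmem : ∀ t ∈ Icc (0 : ℝ) 1, x + t • (y - x) ∈ s := fun t ht =>
    hs.add_smul_sub_mem hx hy ht
  have hbound : ∀ t ∈ Icc (0 : ℝ) 1, -(M * ‖y - x‖ ^ 2) ≤
      fderiv ℝ (fderiv ℝ F) ((x, p) + t • (y - x, (0 : P))) (y - x, 0) (y - x, 0) := by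
    intro t ht
    rw [hseg t ht]
    set B := fderiv ℝ (fderiv ℝ F) (x + t • (y - x), p)
    have hnorm : ‖((y - x, (0 : P)) : (ι → ℝ) × P)‖ = ‖y - x‖ := by simp [Prod.norm_def]
    have hB : ‖B (y - x, 0) (y - x, 0)‖ ≤ M * ‖y - x‖ ^ 2 :=
      calc ‖B (y - x, 0) (y - x, 0)‖ ≤ ‖B‖ * ‖y - x‖ * ‖y - x‖ := hnorm ▸ B.le_opNorm₂ _ _
        _ ≤ M * ‖y - x‖ * ‖y - x‖ := by gcongr; exact hM _ (hmem t ht)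
        _ = M * ‖y - x‖ ^ 2 := by ring
    rw [Real.norm_eq_abs] at hB
    linarith [neg_abs_le (B (y - x, 0) (y - x, 0))]
  have hF' : ∀ t ∈ Icc (0 : ℝ) 1, ContDiffAt ℝ 2 F ((x, p) + t • (y - x, (0 : P))) :=
    fun t ht => hseg t ht ▸ hF _ (hmem t ht)
  have key := apply_add_smul_le_of_fderiv_fderiv_ge hF' hbound ha hb hab
  have hconv : x + b • (y - x) = a • x + b • y := by
    rw [show a = 1 - b by linarith]; module
  simp only [Prod.smul_mk, smul_zero, Prod.mk_add_mk, add_zero, hconv, add_sub_cancel] at key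
  have hsq := sum_sq_smul_add_smul x y hab
  have hnorm := sq_norm_le_sum_sq (y - x)
  simp only [Pi.sub_apply] at hnorm
  simp only [smul_eq_mul]
  nlinarith [mul_nonneg (mul_nonneg ha hb) hM0]

lemma convexOn_of_forall_exists_convexOn_le_eq {E : Type*} [AddCommGroup E] [Module ℝ E]
    {s : Set E} (hs : Convex ℝ s) {u : E → ℝ}
    (h : ∀ x ∈ s, ∃ v : E → ℝ, ConvexOn ℝ s v ∧ v x = u x ∧ ∀ y ∈ s, v y ≤ u y) :
    ConvexOn ℝ s u := by
  refine ⟨hs, fun x hx y hy a b ha hb hab => ?_⟩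
  obtain ⟨v, hv, hvu, hle⟩ := h _ (hs hx hy ha hb hab)
  calc u (a • x + b • y) = v (a • x + b • y) := hvu.symm
    _ ≤ a • v x + b • v y := hv.2 hx hy ha hb hab
    _ ≤ a • u x + b • u y := by gcongr <;> exact hle _ ‹_›

lemma IsCompact.exists_norm_fderiv_fderiv_le {E : Type*} [NormedAddCommGroup E]
    [NormedSpace ℝ E] {F : E → ℝ} {T : Set E} (hT : IsCompact T)
    (hF : ∀ q ∈ T, ContDiffAt ℝ 2 F q) : ∃ M, ∀ q ∈ T, ‖fderiv ℝ (fderiv ℝ F) q‖ ≤ M :=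
  hT.exists_bound_of_continuousOn fun q hq =>
    (((hF q hq).fderiv_right (m := 1) (by norm_num)).fderiv_right (m := 0) (by norm_num))
      |>.continuousAt.continuousWithinAt

/-- Every g-convex function is locally semi-convex: if `g ∈ C²(Γ)` and the
g-supports of `u` on the compact set `K ⊆ Ω` have parameters `(y,z)` ranging in a
compact set `S` with `K × S ⊆ Γ`, then there is `C` such that
`x ↦ u(x) + C|x|²/2` is convex on every ball contained in `K`. -/
theorem stmt15 {n : ℕ} (Γ : Set ((Fin n → ℝ) × (Fin n → ℝ) × ℝ)) (hΓ : IsOpen Γ)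
    (g : (Fin n → ℝ) → (Fin n → ℝ) → ℝ → ℝ)
    (hg : ContDiffOn ℝ 2 (fun q : (Fin n → ℝ) × (Fin n → ℝ) × ℝ => g q.1 q.2.1 q.2.2) Γ)
    (Ω K : Set (Fin n → ℝ)) (hK : IsCompact K) (hKΩ : K ⊆ Ω)
    (u : (Fin n → ℝ) → ℝ)
    (S : Set ((Fin n → ℝ) × ℝ)) (hS : IsCompact S)
    (hSΓ : ∀ x ∈ K, ∀ yz ∈ S, (x, yz.1, yz.2) ∈ Γ)
    (hsupp : ∀ x₀ ∈ K, ∃ yz ∈ S, g x₀ yz.1 yz.2 = u x₀ ∧ ∀ x ∈ Ω, g x yz.1 yz.2 ≤ u x) :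
    ∃ C : ℝ, ∀ (x₀ : Fin n → ℝ) (r : ℝ), Metric.ball x₀ r ⊆ K →
      ConvexOn ℝ (Metric.ball x₀ r) (fun x => u x + C * (∑ i, x i ^ 2) / 2) := by
  have hF : ∀ q ∈ K ×ˢ S, ContDiffAt ℝ 2 (fun q => g q.1 q.2.1 q.2.2) q := fun q hq =>
    hg.contDiffAt (hΓ.mem_nhds (hSΓ q.1 hq.1 q.2 hq.2))
  obtain ⟨M, hM⟩ := (hK.prod hS).exists_norm_fderiv_fderiv_le hF
  refine ⟨M, fun x₀ r hball => convexOn_of_forall_exists_convexOn_le_eq (convex_ball x₀ r)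
    fun x hx => ?_⟩
  obtain ⟨yz, hyz, heq, hle⟩ := hsupp x (hball hx)
  refine ⟨fun x => g x yz.1 yz.2 + M * (∑ i, x i ^ 2) / 2, ?_, by simp only [heq], ?_⟩
  · exact convexOn_add_sum_sq_of_norm_fderiv_fderiv_le (p := yz) (convex_ball x₀ r)
      (fun y hy => hF (y, yz) ⟨hball hy, hyz⟩) (fun y hy => hM (y, yz) ⟨hball hy, hyz⟩)
  · exact fun y hy => add_le_add_left (hle y (hKΩ (hball hy))) _
end
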